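/- For the flipping group 𝐖 of the path graph A_n (n ≥ 2) acting on F_2^n, the orbits are exactly the sets O_i = { a ∈ F_2^n : wt(a) = i or wt(a) = n+1−i } for 0 ≤ i ≤ ⌊(n+1)/2⌋, where wt(a) is the number of elements of the simple basis Δ = {ō_1,…,ō_n} appearing in the expansion of a in Δ. -/

import Mathlib

open Matrix

open scoped Classical in
/-- The flipping matrix of a vertex `s` of a simple graph: `(flipMat G s) u v = 1` iff
`u = v`, or (`v = s` and `uv` is an edge). -/
noncomputable def flipMat {V : Type*} [Fintype V] (G : SimpleGraph V) (s : V) :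
    Matrix V V (ZMod 2) :=
  Matrix.of fun u v => if u = v ∨ (v = s ∧ G.Adj u v) then 1 else 0

/-- The flipping group of a simple graph: the subgroup of `GL_n(F_2)` generated by the
flipping matrices of the vertices. -/
noncomputable def flipGroup {V : Type*} [Fintype V] [DecidableEq V] (G : SimpleGraph V) :
    Subgroup (GL V (ZMod 2)) :=
  Subgroup.closure {g : GL V (ZMod 2) | ∃ s : V, (g : Matrix V V (ZMod 2)) = flipMat G s}

/-- The path graph of type `Aₙ`, with vertices `0, 1, …, n-1` (vertex `i` standing for
`s_{i+1}`) and edges between consecutive vertices. -/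
def pathG (n : ℕ) : SimpleGraph (Fin n) :=
  SimpleGraph.fromRel (fun i j => i.val + 1 = j.val)

namespace PathOrb
open Finset

lemma flipMat_mul_self {V : Type*} [Fintype V] [DecidableEq V] (G : SimpleGraph V) (t : V) :
    flipMat G t * flipMat G t = 1 := by
  classical
  set E : Matrix V V (ZMod 2) :=
    Matrix.of (fun u v => if v = t ∧ G.Adj u v then (1:ZMod 2) else 0) with hEdef
  have hE : flipMat G t = 1 + E := by
    ext u v
    simp only [flipMat, hEdef, Matrix.of_apply, Matrix.add_apply, Matrix.one_apply]
    by_cases h1 : u = v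
    · subst h1
      simp [G.irrefl]
    · simp [h1, Ne.symm h1]
  have hEE : E * E = 0 := by
    ext u v
    simp only [Matrix.mul_apply, Matrix.zero_apply]
    rw [Finset.sum_eq_single t]
    · simp only [hEdef, Matrix.of_apply]
      have : ¬(v = t ∧ G.Adj t v) := by
        rintro ⟨rfl, hadj⟩
        exact absurd hadj (G.irrefl)
      rw [if_neg this, mul_zero]
    · intro w _ hw
      simp [hEdef, hw]
    · simp
  rw [hE]
  have h2 : E + E = 0 := by
    ext u v
    simp only [Matrix.add_apply, Matrix.zero_apply]
    exact CharTwo.add_self_eq_zero _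
  calc (1 + E) * (1 + E) = 1 + (E + E) + E * E := by noncomm_ring
    _ = 1 := by rw [h2, hEE]; simp

noncomputable def flipU {V : Type*} [Fintype V] [DecidableEq V] (G : SimpleGraph V) (t : V) :
    GL V (ZMod 2) :=
  ⟨flipMat G t, flipMat G t, flipMat_mul_self G t, flipMat_mul_self G t⟩

lemma flipU_mem {V : Type*} [Fintype V] [DecidableEq V] (G : SimpleGraph V) (t : V) :
    flipU G t ∈ flipGroup G :=
  Subgroup.subset_closure ⟨t, rfl⟩

lemma flipU_val {V : Type*} [Fintype V] [DecidableEq V] (G : SimpleGraph V) (t : V) :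
    ((flipU G t : GL V (ZMod 2)) : Matrix V V (ZMod 2)) = flipMat G t := rfl


lemma pathG_adj {n : ℕ} (u v : Fin n) :
    (pathG n).Adj u v ↔ (u.val + 1 = v.val ∨ v.val + 1 = u.val) := by
  rw [pathG, SimpleGraph.fromRel_adj]
  constructor
  · rintro ⟨-, h⟩; exact h
  · intro h
    refine ⟨?_, h⟩
    rintro rfl; omega

lemma flip_mulVec {n : ℕ} (t : Fin n) (x : Fin n → ZMod 2) (u : Fin n) :
    (flipMat (pathG n) t).mulVec x u
      = x u + (if u.val + 1 = t.val ∨ t.val + 1 = u.val then x t else 0) := by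
  classical
  have key : ∀ v : Fin n, flipMat (pathG n) t u v * x v
      = (if v = u then x v else 0)
        + (if v = t ∧ (u.val + 1 = t.val ∨ t.val + 1 = u.val) then x v else 0) := by
    intro v
    simp only [flipMat, Matrix.of_apply]
    by_cases h1 : v = u
    · subst h1
      have h2 : ¬(v = t ∧ (v.val + 1 = t.val ∨ t.val + 1 = v.val)) := by
        rintro ⟨rfl, h⟩; omega
      rw [if_pos (Or.inl rfl), if_pos rfl, if_neg h2, one_mul, add_zero]
    · have hcond : (u = v ∨ (v = t ∧ (pathG n).Adj u v))
          ↔ (v = t ∧ (u.val + 1 = t.val ∨ t.val + 1 = u.val)) := by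
        constructor
        · rintro (rfl | ⟨rfl, hadj⟩)
          · exact absurd rfl h1
          · exact ⟨rfl, (pathG_adj u v).mp hadj⟩
        · rintro ⟨rfl, h⟩
          exact Or.inr ⟨rfl, (pathG_adj u v).mpr h⟩
      rw [if_neg h1, zero_add]
      simp only [hcond]
      by_cases h3 : v = t ∧ (u.val + 1 = t.val ∨ t.val + 1 = u.val)
      · rw [if_pos h3, if_pos h3, one_mul]
      · rw [if_neg h3, if_neg h3, zero_mul]
  show ∑ v, flipMat (pathG n) t u v * x v = _
  rw [Finset.sum_congr rfl (fun v _ => key v), Finset.sum_add_distrib]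
  rw [Finset.sum_ite_eq' Finset.univ u x]
  congr 1
  · simp
  · by_cases hP : u.val + 1 = t.val ∨ t.val + 1 = u.val
    · rw [if_pos hP]
      rw [Finset.sum_eq_single t]
      · rw [if_pos ⟨rfl, hP⟩]
      · intro w _ hw
        rw [if_neg (fun h => hw h.1)]
      · simp
    · rw [if_neg hP]
      apply Finset.sum_eq_zero
      intro w _
      rw [if_neg (fun h => hP h.2)]


variable {n : ℕ}

/-- suffix sums -/
def Sfun (n : ℕ) (x : Fin n → ZMod 2) (j : Fin n) : ZMod 2 :=
  ∑ m ∈ Finset.univ.filter (fun m : Fin n => j.val ≤ m.val), x m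

noncomputable def wtS (n : ℕ) (x : Fin n → ZMod 2) : ℕ :=
  (Finset.univ.filter (fun j : Fin n => Sfun n x j ≠ 0)).card

def canonV (n : ℕ) (w : ℕ) : Fin n → ZMod 2 := fun j => if n - w ≤ j.val then 1 else 0

lemma card_filter_ge (n v : ℕ) :
    ((Finset.univ : Finset (Fin n)).filter fun k => v ≤ k.val).card = n - v := by
  rw [Finset.card_filter]
  rw [Fin.sum_univ_eq_sum_range (fun k => if v ≤ k then (1:ℕ) else 0)]
  induction n with
  | zero => simp
  | succ m ih =>
    rw [Finset.sum_range_succ, ih]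
    by_cases h : v ≤ m
    · simp [h]; omega
    · simp [h]; omega

lemma wtS_le (x : Fin n → ZMod 2) : wtS n x ≤ n := by
  classical
  calc (Finset.univ.filter (fun j : Fin n => Sfun n x j ≠ 0)).card
      ≤ (Finset.univ : Finset (Fin n)).card := Finset.card_filter_le _ _
    _ = n := by simp

lemma wtS_canon {w : ℕ} (hw : w ≤ n) (x : Fin n → ZMod 2) (hx : Sfun n x = canonV n w) :
    wtS n x = w := by
  unfold wtS
  rw [hx]
  have : (Finset.univ.filter (fun j : Fin n => canonV n w j ≠ 0)) =
      (Finset.univ.filter fun k : Fin n => n - w ≤ k.val) := by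
    apply Finset.filter_congr; intro j _
    unfold canonV
    by_cases h : n - w ≤ j.val <;> simp [h]
  rw [this, card_filter_ge]
  omega

lemma Sfun_last (x : Fin n → ZMod 2) (hn : 0 < n) :
    Sfun n x ⟨n-1, by omega⟩ = x ⟨n-1, by omega⟩ := by
  unfold Sfun
  rw [Finset.sum_eq_single (⟨n-1, by omega⟩ : Fin n)]
  · intro m _ hm
    simp only [Finset.mem_filter] at *
    exfalso; apply hm; ext; simp at *; omega
  · intro h; simp at h; omega

lemma Sfun_succ (x : Fin n → ZMod 2) (j : Fin n) (h : j.val + 1 < n) :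
    Sfun n x j = x j + Sfun n x ⟨j.val+1, h⟩ := by
  unfold Sfun
  have : (Finset.univ.filter fun m : Fin n => j.val ≤ m.val) =
      insert j (Finset.univ.filter fun m : Fin n => j.val + 1 ≤ m.val) := by
    ext m; simp only [Finset.mem_insert, Finset.mem_filter, Finset.mem_univ, true_and]
    constructor
    · intro hm
      rcases eq_or_lt_of_le hm with h1 | h1
      · left; ext; omega
      · right; omega
    · rintro (rfl | hm)
      · omega
      · omega
  rw [this, Finset.sum_insert]
  simp

lemma Sfun_inj (x y : Fin n → ZMod 2) (h : Sfun n x = Sfun n y) : x = y := by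
  funext j
  by_cases hj : j.val + 1 < n
  · have hx := Sfun_succ x j hj
    have hy := Sfun_succ y j hj
    have h1 := congrFun h j
    have h2 := congrFun h ⟨j.val+1, hj⟩
    rw [hx, hy, h2] at h1
    exact add_right_cancel h1
  · have hn0 : 0 < n := j.pos
    have hj' : j = ⟨n-1, by omega⟩ := by ext; simp; omega
    have hx := Sfun_last x hn0
    have hy := Sfun_last y hn0
    rw [hj', ← hx, ← hy, h]

lemma sum_ite_val (p : Prop) [Decidable p] (v : ℕ) (hv : v < n) (cz : ZMod 2) :
    ∑ m : Fin n, (if m.val = v ∧ p then cz else 0) = if p then cz else 0 := by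
  rw [Finset.sum_eq_single (⟨v, hv⟩ : Fin n)]
  · by_cases hp : p <;> simp [hp]
  · intro m _ hm
    have : ¬(m.val = v ∧ p) := by
      rintro ⟨h1, -⟩; exact hm (by ext; exact h1)
    rw [if_neg this]
  · simp

lemma Sfun_flip (t : Fin n) (x : Fin n → ZMod 2) (j : Fin n) :
    Sfun n ((flipMat (pathG n) t).mulVec x) j
      = Sfun n x j + ((if 1 ≤ t.val ∧ j.val ≤ t.val - 1 then x t else 0)
          + (if t.val + 1 < n ∧ j.val ≤ t.val + 1 then x t else 0)) := by
  classical
  unfold Sfun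
  rw [Finset.sum_congr rfl (fun m _ => by rw [flip_mulVec t x m])]
  rw [Finset.sum_add_distrib]
  congr 1
  have key : ∀ m : Fin n, j.val ≤ m.val →
      (if m.val + 1 = t.val ∨ t.val + 1 = m.val then x t else 0)
        = (if m.val = t.val - 1 ∧ (1 ≤ t.val ∧ j.val ≤ t.val - 1) then x t else 0)
          + (if m.val = t.val + 1 ∧ (t.val + 1 < n ∧ j.val ≤ t.val + 1) then x t else 0) := by
    intro m hm
    have hmn := m.isLt
    by_cases h1 : m.val + 1 = t.val ∨ t.val + 1 = m.val
    · rcases h1 with h1 | h1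
      · rw [if_pos (Or.inl h1), if_pos (by omega), if_neg (by omega), add_zero]
      · rw [if_pos (Or.inr h1), if_neg (by omega), if_pos (by omega), zero_add]
    · rw [if_neg h1, if_neg (by omega), if_neg (by omega), add_zero]
  rw [Finset.sum_congr rfl (fun m hm => key m (Finset.mem_filter.mp hm).2)]
  rw [Finset.sum_add_distrib]
  congr 1
  · rw [Finset.sum_filter]
    have : ∀ m : Fin n,
        (if j.val ≤ m.val then (if m.val = t.val - 1 ∧ (1 ≤ t.val ∧ j.val ≤ t.val - 1) then x t else 0) else 0)
          = (if m.val = t.val - 1 ∧ (1 ≤ t.val ∧ j.val ≤ t.val - 1) then x t else 0) := by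
      intro m
      by_cases h2 : m.val = t.val - 1 ∧ (1 ≤ t.val ∧ j.val ≤ t.val - 1)
      · rw [if_pos h2, if_pos (by omega)]
      · rw [if_neg h2, ite_self]
    rw [Finset.sum_congr rfl (fun m _ => this m)]
    rw [sum_ite_val _ (t.val - 1) (by omega) (x t)]
  · rw [Finset.sum_filter]
    have : ∀ m : Fin n,
        (if j.val ≤ m.val then (if m.val = t.val + 1 ∧ (t.val + 1 < n ∧ j.val ≤ t.val + 1) then x t else 0) else 0)
          = (if m.val = t.val + 1 ∧ (t.val + 1 < n ∧ j.val ≤ t.val + 1) then x t else 0) := by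
      intro m
      by_cases h2 : m.val = t.val + 1 ∧ (t.val + 1 < n ∧ j.val ≤ t.val + 1)
      · rw [if_pos h2, if_pos (by omega)]
      · rw [if_neg h2, ite_self]
    rw [Finset.sum_congr rfl (fun m _ => this m)]
    by_cases ht : t.val + 1 < n
    · rw [sum_ite_val _ (t.val + 1) ht (x t)]
    · rw [if_neg (by omega)]
      apply Finset.sum_eq_zero
      intro m _
      rw [if_neg (by omega)]


lemma addadd (a b : ZMod 2) : a + b + b = a := by
  rw [add_assoc, CharTwo.add_self_eq_zero, add_zero]

lemma Sfun_flip_swap (t : Fin n) (ht : t.val + 1 < n) (x : Fin n → ZMod 2) (j : Fin n) :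
    Sfun n ((flipMat (pathG n) t).mulVec x) j
      = Sfun n x (Equiv.swap t ⟨t.val + 1, ht⟩ j) := by
  rw [Sfun_flip]
  have hq : ((⟨t.val + 1, ht⟩ : Fin n) : ℕ) = t.val + 1 := rfl
  by_cases h1 : j = t
  · subst h1
    rw [Equiv.swap_apply_left, if_neg (by omega), if_pos ⟨ht, by omega⟩]
    rw [Sfun_succ x j ht, zero_add, add_comm (x j), add_assoc,
      CharTwo.add_self_eq_zero, add_zero]
  · by_cases h2 : j = (⟨t.val + 1, ht⟩ : Fin n)
    · subst h2
      rw [Equiv.swap_apply_right, if_neg (by rw [hq]; omega),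
        if_pos ⟨ht, by rw [hq]⟩]
      rw [Sfun_succ x t ht, zero_add, add_comm]
    · rw [Equiv.swap_apply_of_ne_of_ne h1 h2]
      have hjt : j.val ≠ t.val := fun h => h1 (Fin.ext h)
      have hjq : j.val ≠ t.val + 1 := fun h => h2 (Fin.ext h)
      by_cases h3 : j.val < t.val
      · rw [if_pos (by omega), if_pos (by omega), CharTwo.add_self_eq_zero, add_zero]
      · rw [if_neg (by omega), if_neg (by omega), add_zero, add_zero]

lemma Sfun_flip_last (hn : 2 ≤ n) (x : Fin n → ZMod 2) (j : Fin n) :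
    Sfun n ((flipMat (pathG n) (⟨n - 1, by omega⟩ : Fin n)).mulVec x) j
      = if j.val = n - 1 then Sfun n x j
          else Sfun n x j + Sfun n x ⟨n - 1, by omega⟩ := by
  rw [Sfun_flip]
  set t : Fin n := ⟨n - 1, by omega⟩ with hlast
  have hq : (t : ℕ) = n - 1 := rfl
  have hc2 : ¬((t : ℕ) + 1 < n ∧ j.val ≤ (t : ℕ) + 1) := by rw [hq]; omega
  rw [if_neg hc2, add_zero]
  have hjlt : j.val < n := j.isLt
  by_cases h1 : j.val = n - 1
  · rw [if_pos h1, if_neg (by rw [hq]; omega), add_zero]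
  · rw [if_neg h1, if_pos ⟨by rw [hq]; omega, by rw [hq]; omega⟩]
    rw [Sfun_last x (by omega)]

lemma wtS_swap (p q : Fin n) (x y : Fin n → ZMod 2)
    (h : ∀ j, Sfun n y j = Sfun n x (Equiv.swap p q j)) : wtS n y = wtS n x := by
  classical
  unfold wtS
  apply Finset.card_bij' (fun j _ => Equiv.swap p q j) (fun j _ => Equiv.swap p q j)
  · intro j hj
    simp only [Finset.mem_filter, Finset.mem_univ, true_and] at *
    rwa [h j] at hj
  · intro j hj
    simp only [Finset.mem_filter, Finset.mem_univ, true_and] at *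
    rw [h (Equiv.swap p q j), Equiv.swap_apply_self]
    exact hj
  · intro j _; exact Equiv.swap_apply_self _ _ _
  · intro j _; exact Equiv.swap_apply_self _ _ _

lemma zmod2_ne_zero (a : ZMod 2) (h : a ≠ 0) : a = 1 := by
  revert h; revert a; decide

lemma wtS_tau (hn : 2 ≤ n) (x y : Fin n → ZMod 2)
    (h : ∀ j : Fin n, Sfun n y j = if j.val = n - 1 then Sfun n x j
        else Sfun n x j + Sfun n x ⟨n - 1, by omega⟩) :
    (Sfun n x ⟨n - 1, by omega⟩ = 0 → wtS n y = wtS n x) ∧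
      (Sfun n x ⟨n - 1, by omega⟩ ≠ 0 → wtS n y = n + 1 - wtS n x) := by
  classical
  set last : Fin n := ⟨n - 1, by omega⟩ with hlast
  constructor
  · intro h0
    unfold wtS
    congr 1
    apply Finset.filter_congr
    intro j _
    rw [h j]
    by_cases hj : j.val = n - 1
    · rw [if_pos hj]
    · rw [if_neg hj, h0, add_zero]
  · intro h1
    have hone : Sfun n x last = 1 := zmod2_ne_zero _ h1
    have hsupp : (Finset.univ.filter fun j : Fin n => Sfun n y j ≠ 0)
        = insert last (Finset.univ.filter fun j : Fin n => Sfun n x j = 0) := by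
      ext j
      simp only [Finset.mem_insert, Finset.mem_filter, Finset.mem_univ, true_and]
      by_cases hj : j = last
      · subst hj
        simp only [true_or, iff_true]
        rw [h last, if_pos rfl]
        exact h1
      · have hjv : j.val ≠ n - 1 := fun hc => hj (Fin.ext hc)
        rw [h j, if_neg hjv, hone]
        constructor
        · intro hne
          right
          by_contra hz
          have := zmod2_ne_zero _ hz
          rw [this] at hne
          exact hne (by decide)
        · rintro (hc | hz)
          · exact absurd hc hj
          · rw [hz, zero_add]; exact one_ne_zero
    unfold wtS
    rw [hsupp, Finset.card_insert_of_notMem (by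
      simp only [Finset.mem_filter, Finset.mem_univ, true_and]
      rw [hone]; exact one_ne_zero)]
    have hcompl : (Finset.univ.filter fun j : Fin n => Sfun n x j = 0)
        = (Finset.univ.filter fun j : Fin n => Sfun n x j ≠ 0)ᶜ := by
      ext j; simp
    rw [hcompl, Finset.card_compl]
    have hle : (Finset.univ.filter fun j : Fin n => Sfun n x j ≠ 0).card ≤ n := by
      calc _ ≤ (Finset.univ : Finset (Fin n)).card := Finset.card_filter_le _ _
        _ = n := by simp
    simp only [Fintype.card_fin]
    omega


def rel (n : ℕ) (a x : Fin n → ZMod 2) : Prop :=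
  ∃ g ∈ flipGroup (pathG n),
    ((g : GL (Fin n) (ZMod 2)) : Matrix (Fin n) (Fin n) (ZMod 2)).mulVec a = x

lemma rel_refl (a : Fin n → ZMod 2) : rel n a a :=
  ⟨1, one_mem _, by rw [Units.val_one, Matrix.one_mulVec]⟩

lemma rel_trans {a x z : Fin n → ZMod 2} (h1 : rel n a x) (h2 : rel n x z) : rel n a z := by
  obtain ⟨g, hg, hga⟩ := h1
  obtain ⟨h, hh, hhx⟩ := h2
  refine ⟨h * g, mul_mem hh hg, ?_⟩
  rw [Units.val_mul, ← Matrix.mulVec_mulVec, hga, hhx]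

lemma rel_symm {a x : Fin n → ZMod 2} (h : rel n a x) : rel n x a := by
  obtain ⟨g, hg, hga⟩ := h
  refine ⟨g⁻¹, inv_mem hg, ?_⟩
  rw [← hga, Matrix.mulVec_mulVec]
  have : ((g⁻¹ : GL (Fin n) (ZMod 2)) : Matrix (Fin n) (Fin n) (ZMod 2))
      * (g : Matrix (Fin n) (Fin n) (ZMod 2)) = 1 := by
    rw [← Units.val_mul, inv_mul_cancel, Units.val_one]
  rw [this, Matrix.one_mulVec]

lemma rel_flip (t : Fin n) (a : Fin n → ZMod 2) :
    rel n a ((flipMat (pathG n) t).mulVec a) :=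
  ⟨flipU (pathG n) t, flipU_mem _ t, rfl⟩

lemma no_descent_canon (a : Fin n → ZMod 2)
    (h : ∀ (j : Fin n) (hj : j.val + 1 < n), Sfun n a j ≠ 0 → Sfun n a ⟨j.val + 1, hj⟩ ≠ 0) :
    Sfun n a = canonV n (wtS n a) := by
  classical
  have up : ∀ (d : ℕ) (j : Fin n) (hd : j.val + d < n),
      Sfun n a j ≠ 0 → Sfun n a ⟨j.val + d, hd⟩ ≠ 0 := by
    intro d
    induction d with
    | zero =>
      intro j hd hj
      have he : (⟨j.val + 0, hd⟩ : Fin n) = j := by ext; simp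
      rw [he]; exact hj
    | succ e ih =>
      intro j hd hj
      have h1 : j.val + e < n := by omega
      have h2 := ih j h1 hj
      have h3 := h ⟨j.val + e, h1⟩ (by omega) h2
      convert h3 using 2
      ext; simp only [Fin.val_mk]; omega
  have up' : ∀ (j k : Fin n), j.val ≤ k.val → Sfun n a j ≠ 0 → Sfun n a k ≠ 0 := by
    intro j k hjk hj
    have := up (k.val - j.val) j (by omega) hj
    convert this using 2
    ext; simp; omega
  set w := wtS n a with hw
  funext j
  by_cases hj : Sfun n a j ≠ 0
  · have hsub : (Finset.univ.filter fun k : Fin n => j.val ≤ k.val)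
        ⊆ (Finset.univ.filter fun k : Fin n => Sfun n a k ≠ 0) := by
      intro k hk
      simp only [Finset.mem_filter, Finset.mem_univ, true_and] at *
      exact up' j k hk hj
    have hcard := Finset.card_le_card hsub
    rw [card_filter_ge] at hcard
    have hwc : (Finset.univ.filter fun k : Fin n => Sfun n a k ≠ 0).card = w := rfl
    rw [hwc] at hcard
    rw [zmod2_ne_zero _ hj]
    unfold canonV
    rw [if_pos (by omega)]
  · push_neg at hj
    rw [hj]
    have hsub : (Finset.univ.filter fun k : Fin n => Sfun n a k ≠ 0)
        ⊆ (Finset.univ.filter fun k : Fin n => j.val + 1 ≤ k.val) := by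
      intro k hk
      simp only [Finset.mem_filter, Finset.mem_univ, true_and] at *
      by_contra hc
      exact (up' k j (by omega) hk) hj
    have hcard := Finset.card_le_card hsub
    rw [card_filter_ge] at hcard
    have hwc : (Finset.univ.filter fun k : Fin n => Sfun n a k ≠ 0).card = w := rfl
    rw [hwc] at hcard
    have hjn : j.val < n := j.isLt
    unfold canonV
    rw [if_neg (by omega)]

noncomputable def msr (n : ℕ) (a : Fin n → ZMod 2) : ℕ :=
  ∑ j ∈ Finset.univ.filter (fun j : Fin n => Sfun n a j ≠ 0), (n - 1 - j.val)

lemma descent_step (a : Fin n → ZMod 2)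
    (hcan : Sfun n a ≠ canonV n (wtS n a)) :
    ∃ a', rel n a a' ∧ wtS n a' = wtS n a ∧ msr n a' < msr n a := by
  classical
  have hdesc : ∃ (j : Fin n) (hj : j.val + 1 < n),
      Sfun n a j ≠ 0 ∧ Sfun n a ⟨j.val + 1, hj⟩ = 0 := by
    by_contra hc
    push_neg at hc
    exact hcan (no_descent_canon a (fun j hj hne => hc j hj hne))
  obtain ⟨j, hj, hne, hz⟩ := hdesc
  set q : Fin n := ⟨j.val + 1, hj⟩ with hqdef
  set a' := (flipMat (pathG n) j).mulVec a with ha'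
  have hsw : ∀ m, Sfun n a' m = Sfun n a (Equiv.swap j q m) :=
    fun m => Sfun_flip_swap j hj a m
  have hjq : j ≠ q := by
    intro hc
    have : j.val = j.val + 1 := congrArg Fin.val hc
    omega
  have hsupp : (Finset.univ.filter fun m : Fin n => Sfun n a' m ≠ 0)
      = insert q ((Finset.univ.filter fun m : Fin n => Sfun n a m ≠ 0).erase j) := by
    ext m
    simp only [Finset.mem_insert, Finset.mem_erase, Finset.mem_filter, Finset.mem_univ,
      true_and]
    by_cases h1 : m = j
    · subst h1
      rw [hsw, Equiv.swap_apply_left]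
      simp [hz, hjq]
    · by_cases h2 : m = q
      · subst h2
        rw [hsw, Equiv.swap_apply_right]
        simp [hne]
      · rw [hsw, Equiv.swap_apply_of_ne_of_ne h1 h2]
        simp [h1, h2]
  have hqnotin : q ∉ (Finset.univ.filter fun m : Fin n => Sfun n a m ≠ 0).erase j := by
    simp [hz]
  have hjin : j ∈ (Finset.univ.filter fun m : Fin n => Sfun n a m ≠ 0) := by
    simp [hne]
  refine ⟨a', rel_flip j a, ?_, ?_⟩
  · unfold wtS
    rw [hsupp, Finset.card_insert_of_notMem hqnotin,
      Finset.card_erase_of_mem hjin]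
    have : 1 ≤ (Finset.univ.filter fun m : Fin n => Sfun n a m ≠ 0).card :=
      Finset.card_pos.mpr ⟨j, hjin⟩
    omega
  · unfold msr
    rw [hsupp, Finset.sum_insert hqnotin]
    have hsplit := Finset.add_sum_erase
      (Finset.univ.filter fun m : Fin n => Sfun n a m ≠ 0)
      (fun m : Fin n => n - 1 - m.val) hjin
    have hqv : (q : ℕ) = j.val + 1 := rfl
    rw [hqv]
    omega

lemma sort_canon (hn : 2 ≤ n) (a : Fin n → ZMod 2) :
    ∃ x, rel n a x ∧ Sfun n x = canonV n (wtS n a) := by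
  classical
  suffices H : ∀ (N : ℕ) (a : Fin n → ZMod 2), msr n a ≤ N →
      ∃ x, rel n a x ∧ Sfun n x = canonV n (wtS n a) from H (msr n a) a le_rfl
  intro N
  induction N with
  | zero =>
    intro a hM
    by_cases hcan : Sfun n a = canonV n (wtS n a)
    · exact ⟨a, rel_refl a, hcan⟩
    · obtain ⟨a', -, -, hlt⟩ := descent_step a hcan
      omega
  | succ N ih =>
    intro a hM
    by_cases hcan : Sfun n a = canonV n (wtS n a)
    · exact ⟨a, rel_refl a, hcan⟩
    · obtain ⟨a', hrel, hwt, hlt⟩ := descent_step a hcan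
      obtain ⟨x, hrelx, hSx⟩ := ih a' (by omega)
      exact ⟨x, rel_trans hrel hrelx, by rw [hSx, hwt]⟩


lemma flip_wt (hn : 2 ≤ n) (t : Fin n) (x : Fin n → ZMod 2) :
    wtS n ((flipMat (pathG n) t).mulVec x) = wtS n x ∨
      wtS n ((flipMat (pathG n) t).mulVec x) = n + 1 - wtS n x := by
  by_cases ht : t.val + 1 < n
  · exact Or.inl (wtS_swap t ⟨t.val + 1, ht⟩ x _ (Sfun_flip_swap t ht x))
  · have htv : t = ⟨n - 1, by omega⟩ := by
      ext; simp; have := t.isLt; omega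
    rw [htv]
    have h := wtS_tau hn x ((flipMat (pathG n) (⟨n - 1, by omega⟩ : Fin n)).mulVec x)
      (Sfun_flip_last hn x)
    by_cases h0 : Sfun n x ⟨n - 1, by omega⟩ = 0
    · exact Or.inl (h.1 h0)
    · exact Or.inr (h.2 h0)

lemma inv_all (hn : 2 ≤ n) (g : GL (Fin n) (ZMod 2)) (hg : g ∈ flipGroup (pathG n)) :
    ∀ x : Fin n → ZMod 2,
      wtS n (((g : GL (Fin n) (ZMod 2)) : Matrix (Fin n) (Fin n) (ZMod 2)).mulVec x) = wtS n x ∨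
      wtS n (((g : GL (Fin n) (ZMod 2)) : Matrix (Fin n) (Fin n) (ZMod 2)).mulVec x)
        = n + 1 - wtS n x := by
  induction hg using Subgroup.closure_induction with
  | mem g hgen =>
    obtain ⟨t, hT⟩ := hgen
    intro x
    rw [hT]
    exact flip_wt hn t x
  | one =>
    intro x
    rw [Units.val_one, Matrix.one_mulVec]
    exact Or.inl rfl
  | mul g h hgmem hhmem hgi hhi =>
    intro x
    rw [Units.val_mul, ← Matrix.mulVec_mulVec]
    have h1 := hhi x
    have h2 := hgi (((h : GL (Fin n) (ZMod 2)) : Matrix (Fin n) (Fin n) (ZMod 2)).mulVec x)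
    have b1 := wtS_le x (n := n)
    have b2 := wtS_le (((h : GL (Fin n) (ZMod 2)) : Matrix (Fin n) (Fin n) (ZMod 2)).mulVec x) (n := n)
    have b3 := wtS_le (((g : GL (Fin n) (ZMod 2)) : Matrix (Fin n) (Fin n) (ZMod 2)).mulVec
      (((h : GL (Fin n) (ZMod 2)) : Matrix (Fin n) (Fin n) (ZMod 2)).mulVec x)) (n := n)
    omega
  | inv g hgmem hgi =>
    intro x
    have key := hgi (((g⁻¹ : GL (Fin n) (ZMod 2)) : Matrix (Fin n) (Fin n) (ZMod 2)).mulVec x)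
    rw [Matrix.mulVec_mulVec, ← Units.val_mul, mul_inv_cancel, Units.val_one,
      Matrix.one_mulVec] at key
    have b1 := wtS_le x (n := n)
    have b2 := wtS_le (((g⁻¹ : GL (Fin n) (ZMod 2)) : Matrix (Fin n) (Fin n) (ZMod 2)).mulVec x) (n := n)
    omega

end PathOrb

open scoped Classical in
/-- The orbits of `F_2^n` under the flipping group of the path graph `Aₙ` (`n ≥ 2`) are
exactly the sets `O_i = { a : wt a = i or n + 1 - i }` for `0 ≤ i ≤ ⌊(n+1)/2⌋`, where the
weight is taken with respect to the simple basis `Δ = {ō_1, …, ō_n}` (here `b k = ō_{k+1}`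
and `c a` gives the coordinates of `a` in this basis). -/
theorem pathG_orbits (n : ℕ) (hn : 2 ≤ n)
    (b : Fin n → (Fin n → ZMod 2))
    (hb0 : b ⟨0, by omega⟩ = Pi.single (⟨0, by omega⟩ : Fin n) 1)
    (hb : ∀ (k : Fin n) (_h1 : 1 ≤ k.val),
      b k = Pi.single (⟨k.val - 1, by omega⟩ : Fin n) 1 + Pi.single k 1)
    (c : (Fin n → ZMod 2) → (Fin n → ZMod 2))
    (hc : ∀ a : Fin n → ZMod 2, ∑ k : Fin n, c a k • b k = a)
    (wt : (Fin n → ZMod 2) → ℕ)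
    (hwt : ∀ a : Fin n → ZMod 2, wt a = (Finset.univ.filter fun k : Fin n => c a k ≠ 0).card)
    (i : ℕ) (hi : i ≤ (n + 1) / 2) (a : Fin n → ZMod 2)
    (ha : wt a = i ∨ wt a = n + 1 - i) :
    {x : Fin n → ZMod 2 | ∃ g ∈ flipGroup (pathG n),
        ((g : GL (Fin n) (ZMod 2)) : Matrix (Fin n) (Fin n) (ZMod 2)).mulVec a = x}
      = {x : Fin n → ZMod 2 | wt x = i ∨ wt x = n + 1 - i} := by
  classical
  have hb_apply : ∀ k j : Fin n, b k j
      = (if j = k then 1 else 0) + (if j.val + 1 = k.val then 1 else 0) := by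
    intro k j
    by_cases hk : 1 ≤ k.val
    · rw [hb k hk, Pi.add_apply, Pi.single_apply, Pi.single_apply]
      have h1 : (j = (⟨k.val - 1, by omega⟩ : Fin n)) ↔ (j.val + 1 = k.val) := by
        constructor
        · intro h; rw [h]; simp; omega
        · intro h; ext; simp; omega
      rw [add_comm]
      congr 1
      simp only [h1]
    · have hk0 : k = ⟨0, by omega⟩ := by ext; simp; omega
      rw [hk0, hb0, Pi.single_apply]
      have hno : ¬(j.val + 1 = ((⟨0, by omega⟩ : Fin n)).val) := by simp
      rw [if_neg hno, add_zero]
  have heval : ∀ (a : Fin n → ZMod 2) (j : Fin n),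
      a j = c a j + (if h : j.val + 1 < n then c a ⟨j.val + 1, h⟩ else 0) := by
    intro a j
    have h0 := congrFun (hc a) j
    rw [Finset.sum_apply] at h0
    have h1 : ∀ k : Fin n, (c a k • b k) j
        = (if j = k then c a k else 0) + (if j.val + 1 = k.val then c a k else 0) := by
      intro k
      rw [Pi.smul_apply, hb_apply, smul_eq_mul, mul_add]
      congr 1
      · by_cases h : j = k <;> simp [h]
      · by_cases h : j.val + 1 = k.val <;> simp [h]
    rw [Finset.sum_congr rfl (fun k _ => h1 k), Finset.sum_add_distrib] at h0
    rw [Finset.sum_ite_eq Finset.univ j (c a), if_pos (Finset.mem_univ j)] at h0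
    have h2 : (∑ k : Fin n, if j.val + 1 = k.val then c a k else 0)
        = (if h : j.val + 1 < n then c a ⟨j.val + 1, h⟩ else 0) := by
      by_cases h : j.val + 1 < n
      · rw [dif_pos h, Finset.sum_eq_single (⟨j.val + 1, h⟩ : Fin n)]
        · rw [if_pos rfl]
        · intro m _ hm
          rw [if_neg (fun hc => hm (by ext; exact hc.symm))]
        · simp
      · rw [dif_neg h]
        apply Finset.sum_eq_zero
        intro m _
        rw [if_neg (by have := m.isLt; omega)]
    rw [h2] at h0
    exact h0.symm
  have hcS : ∀ (a : Fin n → ZMod 2) (j : Fin n), c a j = PathOrb.Sfun n a j := by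
    intro a
    suffices H : ∀ (d : ℕ) (j : Fin n), j.val + d + 1 = n → c a j = PathOrb.Sfun n a j by
      intro j
      exact H (n - 1 - j.val) j (by have := j.isLt; omega)
    intro d
    induction d with
    | zero =>
      intro j hj
      have hj1 : ¬ (j.val + 1 < n) := by omega
      have he := heval a j
      rw [dif_neg hj1, add_zero] at he
      have hl : j = ⟨n - 1, by omega⟩ := by ext; simp; omega
      rw [← he, hl]
      exact (PathOrb.Sfun_last a (by omega)).symm
    | succ e ih =>
      intro j hj
      have hj1 : j.val + 1 < n := by omega
      have he := heval a j
      rw [dif_pos hj1] at he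
      have hih := ih ⟨j.val + 1, hj1⟩ (by simp; omega)
      rw [PathOrb.Sfun_succ a j hj1, ← hih, he, PathOrb.addadd]
  have hwtS : ∀ x : Fin n → ZMod 2, wt x = PathOrb.wtS n x := by
    intro x
    rw [hwt x]
    unfold PathOrb.wtS
    apply Finset.card_bij (fun j _ => j)
    · intro j hj
      simp only [Finset.mem_filter, Finset.mem_univ, true_and] at *
      rwa [← hcS x j]
    · intro j k _ _ h; exact h
    · intro j hj
      refine ⟨j, ?_, rfl⟩
      simp only [Finset.mem_filter, Finset.mem_univ, true_and] at *
      rwa [hcS x j]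
  rw [hwtS a] at ha
  have b1 := PathOrb.wtS_le a (n := n)
  ext x
  simp only [Set.mem_setOf_eq]
  constructor
  · rintro ⟨g, hg, rfl⟩
    have hwx := PathOrb.inv_all hn g hg a
    have b2 := PathOrb.wtS_le
      (((g : GL (Fin n) (ZMod 2)) : Matrix (Fin n) (Fin n) (ZMod 2)).mulVec a) (n := n)
    rw [hwtS _]
    omega
  · intro hx
    rw [hwtS x] at hx
    have b2 := PathOrb.wtS_le x (n := n)
    obtain ⟨a1, hrel1, hS1⟩ := PathOrb.sort_canon hn a
    obtain ⟨x1, hrelx, hSx⟩ := PathOrb.sort_canon hn x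
    by_cases hEq : PathOrb.wtS n x = PathOrb.wtS n a
    · have hax : a1 = x1 := PathOrb.Sfun_inj _ _ (by rw [hS1, hSx, hEq])
      obtain ⟨g, hg, hgx⟩ := PathOrb.rel_trans hrel1 (PathOrb.rel_symm (hax ▸ hrelx))
      exact ⟨g, hg, hgx⟩
    · have hX : PathOrb.wtS n x = n + 1 - PathOrb.wtS n a := by omega
      have hw1 : 1 ≤ PathOrb.wtS n a := by omega
      have hrelz : PathOrb.rel n a
          ((flipMat (pathG n) (⟨n - 1, by omega⟩ : Fin n)).mulVec a1) :=
        PathOrb.rel_trans hrel1 (PathOrb.rel_flip _ a1)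
      have hwa1 : PathOrb.wtS n a1 = PathOrb.wtS n a := PathOrb.wtS_canon b1 a1 hS1
      have hlastne : PathOrb.Sfun n a1 ⟨n - 1, by omega⟩ ≠ 0 := by
        rw [hS1]
        unfold PathOrb.canonV
        rw [if_pos (by simp; omega)]
        exact one_ne_zero
      have hwz : PathOrb.wtS n ((flipMat (pathG n) (⟨n - 1, by omega⟩ : Fin n)).mulVec a1)
          = n + 1 - PathOrb.wtS n a := by
        have ht := (PathOrb.wtS_tau hn a1 _ (PathOrb.Sfun_flip_last hn a1)).2 hlastne
        rw [ht, hwa1]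
      obtain ⟨z1, hrelz1, hSz1⟩ := PathOrb.sort_canon hn
        ((flipMat (pathG n) (⟨n - 1, by omega⟩ : Fin n)).mulVec a1)
      have hzx : z1 = x1 := PathOrb.Sfun_inj _ _ (by rw [hSz1, hSx, hwz, hX])
      obtain ⟨g, hg, hgx⟩ := PathOrb.rel_trans (PathOrb.rel_trans hrelz hrelz1)
        (PathOrb.rel_symm (hzx ▸ hrelx))
      exact ⟨g, hg, hgx⟩
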